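/- Let M₀, M₁, M₂ be symmetric positive-definite real n×n matrices with decompositions Mᵢ = CᵢᵀCᵢ (Cᵢ invertible, i = 0,1,2). Let f, g : ℝⁿ → ℝⁿ be continuously differentiable maps, x₀ ∈ ℝⁿ, δ₀ > 0. Suppose Λ₁ > 0 satisfies Λ₁ ≥ sqrt(λ_max((C₀ᵀ)⁻¹·Df(ξ)ᵀ·M₁·Df(ξ)·C₀⁻¹)) for all ξ ∈ B_{M₀}(x₀, δ₀), and Λ₂ > 0 satisfies Λ₂ ≥ sqrt(λ_max((C₁ᵀ)⁻¹·Dg(η)ᵀ·M₂·Dg(η)·C₁⁻¹)) for all η ∈ B_{M₁}(f(x₀), Λ₁·δ₀). Then for every x ∈ B_{M₀}(x₀, δ₀), g(f(x)) ∈ B_{M₂}(g(f(x₀)), Λ₂·Λ₁·δ₀). (This is the step-composition property underlying the construction of a reachtube by iterating the stretching-factor bound over consecutive time intervals.) -/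

import Mathlib

/-!
Writing `C` for a factor of `M = Cᵀ C`, the `M`-norm is `‖v‖_M = ‖C v‖₂`. For
`B = C₁ Df(ξ) C₀⁻¹` the matrix in the hypothesis is `Bᵀ B`, so by the Rayleigh bound
`‖Df(ξ) u‖_{M₁} = ‖B (C₀ u)‖₂ ≤ sqrt (λ_max (Bᵀ B)) ‖u‖_{M₀} ≤ Λ ‖u‖_{M₀}` on the ball.
The mean value inequality along `t ↦ C₁ f (x₀ + t (x - x₀))` then maps `B_{M₀}(x₀, δ)` into
`B_{M₁}(f x₀, Λ δ)`, the ball on which the bound for `g` is assumed; applying this step to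
`f` and then to `g` gives the claim.
-/

open Matrix

/-- Largest eigenvalue of a real matrix, as the supremum of its real spectrum. -/
noncomputable def lambdaMax {n : ℕ} (S : Matrix (Fin n) (Fin n) ℝ) : ℝ :=
  sSup (spectrum ℝ S)

/-- Weighted `M`-norm of a vector: `‖y‖_M = sqrt (yᵀ M y)`. -/
noncomputable def Mnorm {n : ℕ} (M : Matrix (Fin n) (Fin n) ℝ) (y : Fin n → ℝ) : ℝ :=
  Real.sqrt (y ⬝ᵥ (M *ᵥ y))

/-- Closed ball of radius `δ` about `x` in the `M`-norm. -/
def Mball {n : ℕ} (M : Matrix (Fin n) (Fin n) ℝ) (x : Fin n → ℝ) (δ : ℝ) :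
    Set (Fin n → ℝ) :=
  {y | Mnorm M (y - x) ≤ δ}

/-- Jacobian matrix of `f : ℝⁿ → ℝⁿ` at `x`. -/
noncomputable def jacobian {n : ℕ} (f : (Fin n → ℝ) → (Fin n → ℝ)) (x : Fin n → ℝ) :
    Matrix (Fin n) (Fin n) ℝ :=
  LinearMap.toMatrix' (fderiv ℝ f x).toLinearMap

section

variable {n : ℕ}

lemma Matrix.IsHermitian.dotProduct_mulVec_le_lambdaMax_mul {A : Matrix (Fin n) (Fin n) ℝ}
    (hA : A.IsHermitian) (v : Fin n → ℝ) :
    v ⬝ᵥ (A *ᵥ v) ≤ lambdaMax A * (v ⬝ᵥ v) := by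
  set U := (hA.eigenvectorUnitary : Matrix (Fin n) (Fin n) ℝ)
  set w : Fin n → ℝ := v ᵥ* U
  have hw : star U *ᵥ v = w := by
    rw [star_eq_conjTranspose, conjTranspose_eq_transpose_of_trivial, mulVec_transpose]
  have hA_form : v ⬝ᵥ (A *ᵥ v) = ∑ i, hA.eigenvalues i * (w i * w i) := by
    conv_lhs => rw [hA.spectral_theorem, Unitary.conjStarAlgAut_apply]
    rw [← mulVec_mulVec, ← mulVec_mulVec, dotProduct_mulVec, hw, dotProduct]
    refine Finset.sum_congr rfl fun i _ => ?_
    rw [mulVec_diagonal, Function.comp_apply, RCLike.ofReal_real_eq_id, id]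
    ring
  have hv_form : v ⬝ᵥ v = ∑ i, w i * w i := by
    have hUU : U * star U = 1 := mem_unitaryGroup_iff.mp hA.eigenvectorUnitary.2
    calc v ⬝ᵥ v = v ⬝ᵥ ((U * star U) *ᵥ v) := by rw [hUU, one_mulVec]
      _ = w ⬝ᵥ w := by rw [← mulVec_mulVec, dotProduct_mulVec, hw]
  rw [hA_form, hv_form, Finset.mul_sum]
  gcongr with i
  · exact mul_self_nonneg _
  · exact le_csSup finite_real_spectrum.bddAbove (hA.eigenvalues_mem_spectrum_real i)

lemma Mnorm_nonneg (M : Matrix (Fin n) (Fin n) ℝ) (v : Fin n → ℝ) : 0 ≤ Mnorm M v :=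
  Real.sqrt_nonneg _

lemma Mnorm_smul (M : Matrix (Fin n) (Fin n) ℝ) (t : ℝ) (v : Fin n → ℝ) :
    Mnorm M (t • v) = |t| * Mnorm M v := by
  rw [Mnorm, Mnorm, mulVec_smul, dotProduct_smul, smul_dotProduct, smul_eq_mul, smul_eq_mul,
    ← mul_assoc, Real.sqrt_mul (mul_self_nonneg t), Real.sqrt_mul_self_eq_abs]

lemma Mnorm_transpose_mul_self (C : Matrix (Fin n) (Fin n) ℝ) (v : Fin n → ℝ) :
    Mnorm (Cᵀ * C) v = √((C *ᵥ v) ⬝ᵥ (C *ᵥ v)) := by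
  rw [Mnorm, ← mulVec_mulVec, dotProduct_mulVec, vecMul_transpose]

lemma Mnorm_le_sqrt_lambdaMax_mul {S : Matrix (Fin n) (Fin n) ℝ} (hS : S.IsHermitian)
    (w : Fin n → ℝ) : Mnorm S w ≤ √(lambdaMax S) * √(w ⬝ᵥ w) := by
  have hw : 0 ≤ w ⬝ᵥ w := by simpa using dotProduct_self_star_nonneg w
  rw [← Real.sqrt_mul' _ hw]
  exact Real.sqrt_le_sqrt (hS.dotProduct_mulVec_le_lambdaMax_mul w)

lemma self_mem_Mball (M : Matrix (Fin n) (Fin n) ℝ) (x : Fin n → ℝ) {δ : ℝ}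
    (hδ : 0 ≤ δ) : x ∈ Mball M x δ := by
  simpa [Mball, Mnorm] using hδ

lemma lineMap_mem_Mball {M : Matrix (Fin n) (Fin n) ℝ} {x₀ x : Fin n → ℝ} {δ t : ℝ}
    (hx : x ∈ Mball M x₀ δ) (ht : t ∈ Set.Icc (0 : ℝ) 1) :
    AffineMap.lineMap x₀ x t ∈ Mball M x₀ δ := by
  rw [Mball, Set.mem_ofPred_eq, ← vsub_eq_sub, AffineMap.lineMap_vsub_left, Mnorm_smul,
    abs_of_nonneg ht.1]
  exact (mul_le_of_le_one_left (Mnorm_nonneg _ _) ht.2).trans hx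

lemma jacobian_mulVec (f : (Fin n → ℝ) → (Fin n → ℝ)) (x u : Fin n → ℝ) :
    jacobian f x *ᵥ u = fderiv ℝ f x u := by
  rw [jacobian, ← Matrix.toLin'_apply, Matrix.toLin'_toMatrix']
  rfl

lemma Mnorm_mulVec_le_of_sqrt_lambdaMax_le {C₀ C₁ J : Matrix (Fin n) (Fin n) ℝ}
    (hC₀ : IsUnit C₀.det) {Λ : ℝ}
    (hΛ : √(lambdaMax ((C₀ᵀ)⁻¹ * Jᵀ * (C₁ᵀ * C₁) * J * C₀⁻¹)) ≤ Λ) (u : Fin n → ℝ) :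
    Mnorm (C₁ᵀ * C₁) (J *ᵥ u) ≤ Λ * Mnorm (C₀ᵀ * C₀) u := by
  set B := C₁ * J * C₀⁻¹
  have hBB : Bᵀ * B = (C₀ᵀ)⁻¹ * Jᵀ * (C₁ᵀ * C₁) * J * C₀⁻¹ := by
    simp only [B, transpose_mul, transpose_nonsing_inv]
    noncomm_ring
  have hBC₀ : B * C₀ = C₁ * J := by
    simp only [B, Matrix.mul_assoc, nonsing_inv_mul _ hC₀, Matrix.mul_one]
  have hB : (Bᵀ * B).IsHermitian := by
    simpa using isHermitian_conjTranspose_mul_self B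
  calc Mnorm (C₁ᵀ * C₁) (J *ᵥ u) = Mnorm (Bᵀ * B) (C₀ *ᵥ u) := by
        rw [Mnorm_transpose_mul_self, Mnorm_transpose_mul_self, mulVec_mulVec, mulVec_mulVec,
          hBC₀]
    _ ≤ √(lambdaMax (Bᵀ * B)) * Mnorm (C₀ᵀ * C₀) u := by
        rw [Mnorm_transpose_mul_self C₀]
        exact Mnorm_le_sqrt_lambdaMax_mul hB _
    _ ≤ Λ * Mnorm (C₀ᵀ * C₀) u := by
        rw [hBB]
        exact mul_le_mul_of_nonneg_right hΛ (Mnorm_nonneg _ _)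

noncomputable def euclideanMulVec (C : Matrix (Fin n) (Fin n) ℝ) :
    (Fin n → ℝ) →L[ℝ] EuclideanSpace ℝ (Fin n) :=
  (EuclideanSpace.equiv (Fin n) ℝ).symm.toContinuousLinearMap ∘L
    LinearMap.toContinuousLinearMap (mulVecLin C)

lemma norm_euclideanMulVec (C : Matrix (Fin n) (Fin n) ℝ) (v : Fin n → ℝ) :
    ‖euclideanMulVec C v‖ = Mnorm (Cᵀ * C) v := by
  rw [Mnorm_transpose_mul_self, EuclideanSpace.norm_eq]
  simp [euclideanMulVec, dotProduct, sq]

theorem mapsTo_Mball_of_sqrt_lambdaMax_le {C₀ C₁ : Matrix (Fin n) (Fin n) ℝ}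
    (hC₀ : IsUnit C₀.det) {f : (Fin n → ℝ) → (Fin n → ℝ)} (hf : Differentiable ℝ f)
    {x₀ : Fin n → ℝ} {δ Λ : ℝ}
    (hΛ : ∀ ξ ∈ Mball (C₀ᵀ * C₀) x₀ δ,
      √(lambdaMax ((C₀ᵀ)⁻¹ * (jacobian f ξ)ᵀ * (C₁ᵀ * C₁) * jacobian f ξ * C₀⁻¹)) ≤ Λ) :
    Set.MapsTo f (Mball (C₀ᵀ * C₀) x₀ δ) (Mball (C₁ᵀ * C₁) (f x₀) (Λ * δ)) := by
  intro x hx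
  have hδ : 0 ≤ δ := (Mnorm_nonneg _ _).trans hx
  have hΛ₀ : 0 ≤ Λ := (Real.sqrt_nonneg _).trans (hΛ x₀ (self_mem_Mball _ _ hδ))
  set γ : ℝ →ᵃ[ℝ] Fin n → ℝ := AffineMap.lineMap x₀ x
  set L := euclideanMulVec C₁
  have hderiv : ∀ t, HasDerivAt (fun t => L (f (γ t))) (L (fderiv ℝ f (γ t) (x - x₀))) t :=
    fun t => L.hasFDerivAt.comp_hasDerivAt t <| (hf (γ t)).hasFDerivAt.comp_hasDerivAt t
      AffineMap.hasDerivAt_lineMap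
  have hbound : ∀ t ∈ Set.Icc (0 : ℝ) 1, ‖L (fderiv ℝ f (γ t) (x - x₀))‖ ≤ Λ * δ := by
    intro t ht
    rw [norm_euclideanMulVec, ← jacobian_mulVec]
    exact (Mnorm_mulVec_le_of_sqrt_lambdaMax_le hC₀ (hΛ _ (lineMap_mem_Mball hx ht)) _).trans
      (mul_le_mul_of_nonneg_left hx hΛ₀)
  have hmvt := norm_image_sub_le_of_norm_deriv_le_segment_01'
    (fun t _ => (hderiv t).hasDerivWithinAt) fun t ht => hbound t (Set.Ico_subset_Icc_self ht)
  rw [Mball, Set.mem_ofPred_eq, ← norm_euclideanMulVec, map_sub]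
  simpa [γ] using hmvt

end

theorem ball_propagation_compose_general {n : ℕ}
    (M₀ M₁ M₂ C₀ C₁ C₂ : Matrix (Fin n) (Fin n) ℝ)
    (hC₀ : IsUnit C₀.det) (hC₁ : IsUnit C₁.det)
    (hCM₀ : C₀ᵀ * C₀ = M₀) (hCM₁ : C₁ᵀ * C₁ = M₁) (hCM₂ : C₂ᵀ * C₂ = M₂)
    (f g : (Fin n → ℝ) → (Fin n → ℝ)) (hf : ContDiff ℝ 1 f) (hg : ContDiff ℝ 1 g)
    (x₀ : Fin n → ℝ) (δ₀ : ℝ)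
    (Λ₁ Λ₂ : ℝ)
    (hΛ₁ : ∀ ξ ∈ Mball M₀ x₀ δ₀,
      Real.sqrt (lambdaMax
        ((C₀ᵀ)⁻¹ * (jacobian f ξ)ᵀ * M₁ * jacobian f ξ * C₀⁻¹)) ≤ Λ₁)
    (hΛ₂ : ∀ η ∈ Mball M₁ (f x₀) (Λ₁ * δ₀),
      Real.sqrt (lambdaMax
        ((C₁ᵀ)⁻¹ * (jacobian g η)ᵀ * M₂ * jacobian g η * C₁⁻¹)) ≤ Λ₂) :
    ∀ x ∈ Mball M₀ x₀ δ₀, g (f x) ∈ Mball M₂ (g (f x₀)) (Λ₂ * Λ₁ * δ₀) := by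
  subst hCM₀ hCM₁ hCM₂
  have hf_step := mapsTo_Mball_of_sqrt_lambdaMax_le hC₀ (hf.differentiable one_ne_zero) hΛ₁
  have hg_step := mapsTo_Mball_of_sqrt_lambdaMax_le hC₁ (hg.differentiable one_ne_zero) hΛ₂
  intro x hx
  rw [mul_assoc]
  exact hg_step (hf_step hx)

/-- step-composition property underlying the reachtube
construction: iterating the stretching-factor bound over two consecutive
steps multiplies the radii. -/
theorem ball_propagation_compose {n : ℕ}
    (M₀ M₁ M₂ C₀ C₁ C₂ : Matrix (Fin n) (Fin n) ℝ)
    (hM₀ : M₀.PosDef) (hM₁ : M₁.PosDef) (hM₂ : M₂.PosDef)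
    (hC₀ : IsUnit C₀.det) (hC₁ : IsUnit C₁.det) (hC₂ : IsUnit C₂.det)
    (hCM₀ : C₀ᵀ * C₀ = M₀) (hCM₁ : C₁ᵀ * C₁ = M₁) (hCM₂ : C₂ᵀ * C₂ = M₂)
    (f g : (Fin n → ℝ) → (Fin n → ℝ)) (hf : ContDiff ℝ 1 f) (hg : ContDiff ℝ 1 g)
    (x₀ : Fin n → ℝ) (δ₀ : ℝ) (hδ₀ : 0 < δ₀)
    (Λ₁ Λ₂ : ℝ) (hΛ₁pos : 0 < Λ₁) (hΛ₂pos : 0 < Λ₂)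
    (hΛ₁ : ∀ ξ ∈ Mball M₀ x₀ δ₀,
      Real.sqrt (lambdaMax
        ((C₀ᵀ)⁻¹ * (jacobian f ξ)ᵀ * M₁ * jacobian f ξ * C₀⁻¹)) ≤ Λ₁)
    (hΛ₂ : ∀ η ∈ Mball M₁ (f x₀) (Λ₁ * δ₀),
      Real.sqrt (lambdaMax
        ((C₁ᵀ)⁻¹ * (jacobian g η)ᵀ * M₂ * jacobian g η * C₁⁻¹)) ≤ Λ₂) :
    ∀ x ∈ Mball M₀ x₀ δ₀, g (f x) ∈ Mball M₂ (g (f x₀)) (Λ₂ * Λ₁ * δ₀) :=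
  ball_propagation_compose_general M₀ M₁ M₂ C₀ C₁ C₂ hC₀ hC₁ hCM₀ hCM₁ hCM₂ f g hf hg x₀ δ₀ Λ₁ Λ₂
    hΛ₁ hΛ₂
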